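/- Let A be a perfect MV-algebra. If x ≤ ¬x and y ≤ ¬y, then x ⊕ y ≤ ¬(x ⊕ y). That is, the radical {x : x ≤ ¬x} is closed under ⊕. -/

import Mathlib

/-- An MV-algebra `(A, ⊕, ¬, 0)`. -/
class MV (A : Type*) where
  op : A → A → A
  neg : A → A
  zero : A
  op_assoc : ∀ x y z : A, op (op x y) z = op x (op y z)
  op_comm : ∀ x y : A, op x y = op y x
  op_zero : ∀ x : A, op x zero = x
  neg_neg : ∀ x : A, neg (neg x) = x
  op_neg_zero : ∀ x : A, op x (neg zero) = neg zero
  mv6 : ∀ x y : A, op (neg (op (neg x) y)) y = op (neg (op (neg y) x)) x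

namespace MV

variable {A : Type*} [MV A]

/-- `1 := ¬0`. -/
def one : A := neg zero

/-- `x ⊙ y := ¬(¬x ⊕ ¬y)`. -/
def odot (x y : A) : A := neg (op (neg x) (neg y))

/-- `sup(x,y) := (x ⊙ ¬y) ⊕ y`. -/
def ssup (x y : A) : A := op (odot x (neg y)) y

/-- `inf(x,y) := (x ⊕ ¬y) ⊙ y`. -/
def sinf (x y : A) : A := odot (op x (neg y)) y

/-- `x ≤ y` iff `¬x ⊕ y = 1`. -/
def le (x y : A) : Prop := op (neg x) y = one

/-- `x ≤ y` iff `inf(x,y) = x`. -/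
def leInf (x y : A) : Prop := sinf x y = x

/-- `n`-fold sum `nx = x ⊕ ⋯ ⊕ x`. -/
def nsm : ℕ → A → A
  | 0, _ => zero
  | n + 1, x => op x (nsm n x)

/-- `x² := x ⊙ x`. -/
def sq (x : A) : A := odot x x

end MV

namespace MV

/-- A perfect MV-algebra: nontrivial, satisfying `x² ⊕ x² = (x ⊕ x)²` and,
for every `x`, either `x ≤ ¬x` or `¬x ≤ x`. -/
def Perfect (A : Type*) [MV A] : Prop :=
  (zero : A) ≠ one ∧
  (∀ x : A, op (sq x) (sq x) = sq (op x x)) ∧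
  (∀ x : A, le x (neg x) ∨ le (neg x) x)

end MV

/-!
If `¬(x ⊕ y) ≤ x ⊕ y` then `2x ⊕ 2y = 1`, where `2x` and `2y` again lie in the radical
(the square identity gives `(2x)² = x² ⊕ x² = 0`). A radical element `a` with `a ⊕ b = 1`
satisfies `a ≤ b`, because `1 = a ⊕ b ≤ ¬a ⊕ b`; hence `1 = 2x ⊕ 2y ≤ 2y ⊕ 2y`. So the radical
element `4y` equals `1`, which forces `0 = 1`.
-/

namespace MV

variable {A : Type*} [MV A]

lemma neg_one : neg (one : A) = zero := neg_neg zero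

lemma op_one (x : A) : op x one = one := op_neg_zero x

lemma zero_op (x : A) : op zero x = x := by rw [op_comm, op_zero]

lemma one_op (x : A) : op one x = one := by rw [op_comm, op_one]

lemma op_op_op_comm (a b c d : A) : op (op a b) (op c d) = op (op a c) (op b d) := by
  rw [op_assoc, ← op_assoc b, op_comm b c, op_assoc c, ← op_assoc]

lemma neg_op_self (x : A) : op (neg x) x = one := by
  simpa only [op_one, neg_one, zero_op] using (mv6 x one).symm

lemma eq_one_of_one_le {x : A} (h : le one x) : x = one := by
  rwa [le, neg_one, zero_op] at h

lemma eq_op_neg_of_le {a b : A} (h : le a b) : b = op a (neg (op (neg b) a)) := by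
  have h6 := mv6 a b
  rwa [show op (neg a) b = one from h, neg_one, zero_op, op_comm] at h6

lemma op_le_op_right {a b : A} (h : le a b) (c : A) : le (op a c) (op b c) := by
  show op (neg (op a c)) (op b c) = one
  rw [eq_op_neg_of_le h, op_assoc a, op_comm (neg (op (neg b) a)) c, ← op_assoc a c,
    ← op_assoc, neg_op_self, one_op]

lemma le_of_le_neg_of_op_eq_one {a b : A} (ha : le a (neg a)) (hab : op a b = one) :
    le a b :=
  eq_one_of_one_le (hab ▸ op_le_op_right ha b)

lemma op_self_eq_one_of_le {a b : A} (hab : le a b) (h : op a b = one) : op b b = one :=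
  eq_one_of_one_le (h ▸ op_le_op_right hab b)

lemma ne_one_of_le_neg (h01 : (zero : A) ≠ one) {a : A} (ha : le a (neg a)) : a ≠ one := by
  rintro rfl
  exact h01 (by rwa [le, neg_one, op_zero] at ha)

lemma le_neg_iff_sq_eq_zero {x : A} : le x (neg x) ↔ sq x = zero := by
  refine ⟨fun h => ?_, fun h => (neg_neg _).symm.trans (congrArg neg h)⟩
  rw [sq, odot, show op (neg x) (neg x) = one from h, neg_one]

lemma op_self_le_neg (hsq : ∀ x : A, op (sq x) (sq x) = sq (op x x))
    {x : A} (hx : le x (neg x)) : le (op x x) (neg (op x x)) := by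
  rw [le_neg_iff_sq_eq_zero] at hx ⊢
  rw [← hsq, hx, op_zero]

end MV

open MV in
/-- In a perfect MV-algebra, the radical `{x : x ≤ ¬x}` is closed under `⊕`. -/
theorem perfect_radical_op_closed {A : Type*} [MV A] (hA : Perfect A) :
    ∀ x y : A, le x (neg x) → le y (neg y) → le (op x y) (neg (op x y)) := by
  obtain ⟨hnt, hsq, hdich⟩ := hA
  intro x y hx hy
  refine (hdich (op x y)).resolve_right fun h => ?_
  have hxy : op (op x x) (op y y) = one := by
    have h' : op (neg (neg (op x y))) (op x y) = one := h
    rwa [MV.neg_neg, op_op_op_comm] at h'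
  have hx2 := op_self_le_neg hsq hx
  have hy4 := op_self_le_neg hsq (op_self_le_neg hsq hy)
  exact ne_one_of_le_neg hnt hy4
    (op_self_eq_one_of_le (le_of_le_neg_of_op_eq_one hx2 hxy) hxy)
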